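/- Let D = det((a†_{p,q})_{1≤p,q≤m}) be the determinant of an m×m matrix of pairwise commuting creation operators, expanded by the Leibniz formula. Then for any 1 ≤ i < j ≤ m, applying the raising bilinear c_{i,j} = Σ_{k=1}^{m} a†_{i,k} a_{j,k} to D|0⟩ gives zero: c_{i,j} D |0⟩ = 0, because the resulting expression is the determinant of a matrix with two equal rows. -/

import Mathlib

/-!
Since `c_{i,j}` kills the vacuum, `c_{i,j} D |0⟩ = [c_{i,j}, D] |0⟩`. Commutation with `c_{i,j}`
is a derivation sending `a†_{p,q}` to `δ_{p,j} a†_{i,q}`, so `[c_{i,j}, D]` is the Leibniz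
determinant of the matrix whose row `j` is replaced by row `i`. Its entries pairwise commute, so
it is an honest determinant over a commutative subring, and it has two equal rows.
-/

open Matrix

theorem mul_prod_ofFn_sub_prod_ofFn_mul {R : Type*} [Ring R] (y : R) :
    ∀ {n : ℕ} (f : Fin n → R),
      y * (List.ofFn f).prod - (List.ofFn f).prod * y
        = ∑ p, (List.ofFn (Function.update f p (y * f p - f p * y))).prod
  | 0, _ => by simp
  | n + 1, f => by
    have ih := mul_prod_ofFn_sub_prod_ofFn_mul y (f ∘ Fin.succ)
    simp only [Function.comp_apply] at ih
    have hsucc (p : Fin n) (v : R) :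
        (fun i => Function.update f p.succ v i.succ) = Function.update (f ∘ Fin.succ) p v :=
      Function.update_comp_eq_of_injective f (Fin.succ_injective n) p v
    simp only [List.ofFn_succ, List.prod_cons, Fin.sum_univ_succ, Function.update_self,
      Function.update_of_ne (Fin.succ_ne_zero _), Function.update_of_ne (Fin.succ_ne_zero _).symm,
      hsucc, ← Finset.mul_sum, ← ih, ← Function.comp_def f Fin.succ]
    noncomm_ring

section LeibnizDet

variable {R : Type*} [Ring R] {m : ℕ}

def leibnizDet (x : Matrix (Fin m) (Fin m) R) : R :=
  ∑ σ : Equiv.Perm (Fin m), (Equiv.Perm.sign σ : ℤ) • (List.ofFn fun p => x p (σ p)).prod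

theorem leibnizDet_map {A : Type*} [CommRing A] (φ : A →+* R) (X : Matrix (Fin m) (Fin m) A) :
    leibnizDet (X.map φ) = φ X.det := by
  rw [← det_transpose, det_apply, map_sum, leibnizDet]
  refine Finset.sum_congr rfl fun σ _ => ?_
  rw [Units.smul_def, map_zsmul, ← List.prod_ofFn, map_list_prod, List.map_ofFn]
  rfl

open scoped IsMulCommutative in
theorem leibnizDet_eq_zero_of_row_eq (x : Matrix (Fin m) (Fin m) R)
    (hx : ∀ p q r s, Commute (x p q) (x r s)) {i j : Fin m} (hij : i ≠ j) (hrow : x i = x j) :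
    leibnizDet x = 0 := by
  let S := Set.range fun pq : Fin m × Fin m => x pq.1 pq.2
  have : IsMulCommutative (Subring.closure S) := Subring.isMulCommutative_closure <| by
    rintro _ ⟨⟨p, q⟩, rfl⟩ _ ⟨⟨r, s⟩, rfl⟩
    exact hx p q r s
  let X : Matrix (Fin m) (Fin m) (Subring.closure S) :=
    fun p q => ⟨x p q, Subring.subset_closure ⟨(p, q), rfl⟩⟩
  have hX : X i = X j := funext fun q => Subtype.ext (congrFun hrow q)
  change leibnizDet (X.map (Subring.closure S).subtype) = 0
  rw [leibnizDet_map, det_zero_of_row_eq hij hX, map_zero]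

theorem leibnizDet_updateRow_eq_zero (x : Matrix (Fin m) (Fin m) R)
    (hx : ∀ p q r s, Commute (x p q) (x r s)) {i j : Fin m} (hij : i ≠ j) :
    leibnizDet (x.updateRow j (x i)) = 0 := by
  refine leibnizDet_eq_zero_of_row_eq _ (fun p q r s => ?_) hij ?_
  · simp only [updateRow_apply]
    split_ifs <;> apply hx
  · rw [updateRow_self, updateRow_ne hij]

theorem mul_leibnizDet_sub_leibnizDet_mul (x : Matrix (Fin m) (Fin m) R) (y : R) {i j : Fin m}
    (hy : ∀ p q, y * x p q - x p q * y = if p = j then x i q else 0) :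
    y * leibnizDet x - leibnizDet x * y = leibnizDet (x.updateRow j (x i)) := by
  rw [leibnizDet, leibnizDet, Finset.mul_sum, Finset.sum_mul, ← Finset.sum_sub_distrib]
  refine Finset.sum_congr rfl fun σ _ => ?_
  rw [mul_smul_comm, smul_mul_assoc, ← smul_sub, mul_prod_ofFn_sub_prod_ofFn_mul,
    Finset.sum_eq_single j]
  · congr 3
    ext p
    by_cases hp : p = j
    · subst hp
      simp [hy]
    · simp [hp]
  · intro p _ hpj
    exact List.prod_eq_zero (List.mem_ofFn.mpr ⟨p, by simp [hy, hpj]⟩)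
  · simp

end LeibnizDet

theorem sum_creation_mul_annihilation_commutator {R : Type*} [Ring R] {m : ℕ}
    (a ad : Fin m → Fin m → R)
    (hccr : ∀ i j k l, a i k * ad j l - ad j l * a i k = if i = j ∧ k = l then 1 else 0)
    (hdd : ∀ i j k l, ad i k * ad j l - ad j l * ad i k = 0) (i j p q : Fin m) :
    (∑ k, ad i k * a j k) * ad p q - ad p q * ∑ k, ad i k * a j k
      = if p = j then ad i q else 0 := by
  have hterm (k : Fin m) : ad i k * a j k * ad p q - ad p q * (ad i k * a j k)
      = ad i k * (a j k * ad p q - ad p q * a j k)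
        + (ad i k * ad p q - ad p q * ad i k) * a j k := by
    noncomm_ring
  simp only [Finset.sum_mul, Finset.mul_sum, ← Finset.sum_sub_distrib, hterm, hccr, hdd,
    zero_mul, add_zero, mul_ite, mul_one, mul_zero]
  split_ifs with hp
  · simp [hp]
  · simp [Ne.symm hp]

theorem raising_annihilates_determinant_general {V : Type*} [AddCommGroup V] [Module ℂ V]
    (m : ℕ)
    (a ad : Fin m → Fin m → Module.End ℂ V) (v₀ : V)
    (hccr : ∀ (i j : Fin m) (k l : Fin m),
      a i k * ad j l - ad j l * a i k = if i = j ∧ k = l then 1 else 0)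
    (hdd : ∀ (i j : Fin m) (k l : Fin m), ad i k * ad j l - ad j l * ad i k = 0)
    (hvac : ∀ (i k : Fin m), (a i k) v₀ = 0)
    (c : Fin m → Fin m → Module.End ℂ V)
    (hc : ∀ i j : Fin m, c i j = ∑ k : Fin m, ad i k * a j k)
    (D : Module.End ℂ V)
    (hD : D = ∑ σ : Equiv.Perm (Fin m),
      (Equiv.Perm.sign σ : ℤ) • (List.ofFn fun p : Fin m => ad p (σ p)).prod) :
    ∀ i j : Fin m, i < j → (c i j) (D v₀) = 0 := by
  intro i j hij
  have hcomm : ∀ p q r s, Commute (ad p q) (ad r s) := fun p q r s => sub_eq_zero.mp (hdd p r q s)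
  have hcD : Commute (c i j) D := by
    rw [hc, show D = leibnizDet ad from hD, Commute, SemiconjBy, ← sub_eq_zero,
      mul_leibnizDet_sub_leibnizDet_mul ad _
      (sum_creation_mul_annihilation_commutator a ad hccr hdd i j)]
    exact leibnizDet_updateRow_eq_zero ad hcomm hij.ne
  have hc_vac : c i j v₀ = 0 := by simp [hc, hvac]
  calc c i j (D v₀) = D (c i j v₀) := congrArg (· v₀) hcD.eq
    _ = 0 := by rw [hc_vac, map_zero]

/-- Applying the raising bilinear `c_{i,j} = Σ_k a†_{i,k} a_{j,k}` (with `i < j`) to the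
determinant state `D|0⟩`, where `D` is the Leibniz-formula determinant of the `m × m`
matrix of commuting creation operators, gives zero. -/
theorem raising_annihilates_determinant {V : Type*} [AddCommGroup V] [Module ℂ V]
    (m : ℕ)
    (a ad : Fin m → Fin m → Module.End ℂ V) (v₀ : V)
    (hccr : ∀ (i j : Fin m) (k l : Fin m),
      a i k * ad j l - ad j l * a i k = if i = j ∧ k = l then 1 else 0)
    (haa : ∀ (i j : Fin m) (k l : Fin m), a i k * a j l - a j l * a i k = 0)
    (hdd : ∀ (i j : Fin m) (k l : Fin m), ad i k * ad j l - ad j l * ad i k = 0)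
    (hvac : ∀ (i k : Fin m), (a i k) v₀ = 0)
    (c : Fin m → Fin m → Module.End ℂ V)
    (hc : ∀ i j : Fin m, c i j = ∑ k : Fin m, ad i k * a j k)
    (D : Module.End ℂ V)
    (hD : D = ∑ σ : Equiv.Perm (Fin m),
      (Equiv.Perm.sign σ : ℤ) • (List.ofFn fun p : Fin m => ad p (σ p)).prod) :
    ∀ i j : Fin m, i < j → (c i j) (D v₀) = 0 :=
  raising_annihilates_determinant_general m a ad v₀ hccr hdd hvac c hc D hD
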